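/- arXiv:1712.09626 — 2 statements merged into one kernel-verified Lean document; each statement's English description precedes it below -/
import Mathlib

section
/- For n ≥ 2, the set { s_i s_{i+1} ⋯ s_{n−1} a_n^ε : 1 ≤ i ≤ n, ε ∈ {0,1} } (with the convention that for i = n the element is a_n^ε) is a complete set of left coset representatives of the subgroup B̂_{n−1} in the twisted hyperoctahedral group B̂_n. -/
/-- Generators of the twisted hyperoctahedral group `B̂_n`: the central element
`z`, the Clifford-type generators `a i` (`0 ≤ i < n`) and the Coxeter generators
`s i` (`0 ≤ i < n-1`, with `s i` exchanging `i` and `i+1`); generators with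
out-of-range indices are killed by relations. -/
inductive BGen : Type
  | z : BGen
  | a : ℕ → BGen
  | s : ℕ → BGen

open FreeGroup in
/-- The defining relations of `B̂_n = Cl_n ⋊ S_n`. -/
inductive BRel (n : ℕ) : FreeGroup BGen → Prop
  | zsq : BRel n (of .z * of .z)
  | zcentral (g : BGen) : BRel n (of .z * of g * (of .z)⁻¹ * (of g)⁻¹)
  | asq (i : ℕ) (h : i < n) : BRel n (of (.a i) * of (.a i) * (of .z)⁻¹)
  | aswap (i j : ℕ) (hij : i ≠ j) (hi : i < n) (hj : j < n) :
      BRel n (of (.a i) * of (.a j) * (of .z * of (.a j) * of (.a i))⁻¹)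
  | ssq (i : ℕ) (h : i + 1 < n) : BRel n (of (.s i) * of (.s i))
  | braid (i : ℕ) (h : i + 2 < n) : BRel n ((of (.s i) * of (.s (i + 1))) ^ 3)
  | sfar (i j : ℕ) (h : i + 2 ≤ j) (hj : j + 1 < n) :
      BRel n (of (.s i) * of (.s j) * (of (.s i))⁻¹ * (of (.s j))⁻¹)
  | sa1 (i : ℕ) (h : i + 1 < n) :
      BRel n (of (.s i) * of (.a i) * (of (.s i))⁻¹ * (of (.a (i + 1)))⁻¹)
  | sa2 (i : ℕ) (h : i + 1 < n) :
      BRel n (of (.s i) * of (.a (i + 1)) * (of (.s i))⁻¹ * (of (.a i))⁻¹)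
  | sa3 (i j : ℕ) (h : i + 1 < n) (hj : j < n) (h1 : j ≠ i) (h2 : j ≠ i + 1) :
      BRel n (of (.s i) * of (.a j) * (of (.s i))⁻¹ * (of (.a j))⁻¹)
  | akill (i : ℕ) (h : n ≤ i) : BRel n (of (.a i))
  | skill (i : ℕ) (h : n ≤ i + 1) : BRel n (of (.s i))

/-- The twisted hyperoctahedral group `B̂_n`. -/
abbrev Bhat (n : ℕ) : Type := PresentedGroup {w | BRel n w}

/-- The central element `z` of `B̂_n`. -/
def zElt (n : ℕ) : Bhat n := PresentedGroup.of BGen.z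

/-- The generator `a i` of `B̂_n` (`a₁, …, a_n` of the paper, 0-indexed). -/
def aElt (n : ℕ) (i : ℕ) : Bhat n := PresentedGroup.of (BGen.a i)

/-- The Coxeter generator `s i` of `B̂_n` (`s₁, …, s_{n-1}` of the paper,
0-indexed: `s i` exchanges `i` and `i+1`). -/
def sElt (n : ℕ) (i : ℕ) : Bhat n := PresentedGroup.of (BGen.s i)

/-- The product `s_i s_{i+1} ⋯ s_{m-1}` (0-indexed). -/
def sProd (n : ℕ) (i m : ℕ) : Bhat n :=
  ((List.range (m - i)).map fun d => sElt n (i + d)).prod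


/-- The subgroup `B̂_{n-1} ⊆ B̂_n`, generated by `z`, `a₁, …, a_{n-1}` and
`s₁, …, s_{n-2}` (0-indexed: `a i` for `i < n-1` and `s i` for `i+1 < n-1`). -/
def BhatPrev (n : ℕ) : Subgroup (Bhat n) :=
  Subgroup.closure
    ({zElt n} ∪ {x | ∃ i, i < n - 1 ∧ x = aElt n i} ∪ {x | ∃ i, i + 1 < n - 1 ∧ x = sElt n i})

/-- The coset representative `s_i s_{i+1} ⋯ s_{n-1} a_n^ε` (0-indexed: for
`i : Fin n`, the product `s_i ⋯ s_{n-2}` times `(a_{n-1})^ε`; for `i = n-1` the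
`s`-product is empty, matching the convention for `i = n`). -/
def cosetRep (n : ℕ) (p : Fin n × Bool) : Bhat n :=
  sProd n p.1 (n - 1) * (aElt n (n - 1)) ^ (cond p.2 1 0)

/-!
Surjectivity: left multiplication by each generator `z`, `a_j`, `s_j` permutes the finite set of
cosets `s_i ⋯ s_{n-1} a_n^ε B̂_{n-1}`. Indeed, the generator is either absorbed into the
representative (changing `i` by one or flipping `ε`), or it can be pushed to the right through
`s_i ⋯ s_{n-1}`, where it becomes an element of `B̂_{n-1}`, a subgroup normalised by `a_n`.
A finite set of cosets that is stable under a generating set and contains the trivial coset is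
all of `B̂_n ⧸ B̂_{n-1}`.

Injectivity: `B̂_n` acts on signed indices `ℕ × Bool`, with `z` acting trivially, `a_j` changing
the sign of `j` and `s_j` exchanging `j` and `j + 1` (indices from `0`).
`B̂_{n-1}` fixes `(n - 1, false)`, and the representative indexed by `(i, ε)` sends this point to
`(i, ε)`.
-/

namespace Equiv

theorem swap_mul_swap_pow_three {α : Type*} [DecidableEq α] {a b c : α} (hab : a ≠ b)
    (hac : a ≠ c) (hbc : b ≠ c) : (swap a b * swap b c) ^ 3 = 1 := by
  have h₁ : swap a b * swap b c * swap a b = swap a c := by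
    have := swap_apply_apply (swap a b) b c
    rwa [swap_inv, swap_apply_right, swap_apply_of_ne_of_ne hac.symm hbc.symm, eq_comm] at this
  have h₂ : swap b c * swap a b * swap b c = swap a c := by
    have := swap_apply_apply (swap b c) a b
    rwa [swap_inv, swap_apply_left, swap_apply_of_ne_of_ne hab hac, eq_comm] at this
  calc (swap a b * swap b c) ^ 3
      = (swap a b * swap b c * swap a b) * (swap b c * swap a b * swap b c) := by
        simp only [pow_succ, pow_zero, one_mul, mul_assoc]
    _ = 1 := by rw [h₁, h₂, swap_mul_self]

theorem swap_mul_swap_comm {α : Type*} [DecidableEq α] {a b c d : α} (hca : c ≠ a)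
    (hcb : c ≠ b) (hda : d ≠ a) (hdb : d ≠ b) :
    swap a b * swap c d = swap c d * swap a b := by
  rw [mul_swap_eq_swap_mul, swap_apply_of_ne_of_ne hca hcb, swap_apply_of_ne_of_ne hda hdb]

def Perm.prodCongrReflHom (α β : Type*) : Perm α →* Perm (α × β) where
  toFun σ := σ.prodCongr (Equiv.refl β)
  map_one' := rfl
  map_mul' _ _ := rfl

@[simp] theorem Perm.prodCongrReflHom_apply {α β : Type*} (σ : Perm α) (x : α × β) :
    Perm.prodCongrReflHom α β σ x = (σ x.1, x.2) := rfl

end Equiv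

open Equiv

open Pointwise in
theorem smul_set_eq_self_of_closure_eq_top {G α : Type*} [Group G] [MulAction G α] {S : Set G}
    (hS : Subgroup.closure S = ⊤) {C : Set α} (hC : C.Finite) (hSC : ∀ s ∈ S, s • C ⊆ C)
    (g : G) : g • C = C := by
  have : Subgroup.closure S ≤ MulAction.stabilizer G C :=
    (Subgroup.closure_le _).mpr fun s hs =>
      Set.eq_of_subset_of_ncard_le (hSC s hs) (Set.ncard_smul_set s C).ge hC
  exact this (hS ▸ Subgroup.mem_top g)

theorem injective_mk_of_injective_apply {G α ι : Type*} [Group G] {H : Subgroup G}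
    (φ : G →* Perm α) {x : α} (hH : ∀ h ∈ H, φ h x = x) {f : ι → G}
    (hf : Function.Injective fun i => φ (f i) x) :
    Function.Injective fun i => (f i : G ⧸ H) := by
  intro i j hij
  have := hH _ (QuotientGroup.eq.mp hij)
  rw [map_mul, map_inv, Perm.mul_apply, Perm.inv_eq_iff_eq] at this
  exact hf this.symm

namespace Bhat

variable {n : ℕ}

@[simp] theorem mk_of_z : PresentedGroup.mk {w | BRel n w} (FreeGroup.of .z) = zElt n := rfl

@[simp] theorem mk_of_a (i : ℕ) :
    PresentedGroup.mk {w | BRel n w} (FreeGroup.of (.a i)) = aElt n i := rfl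

@[simp] theorem mk_of_s (i : ℕ) :
    PresentedGroup.mk {w | BRel n w} (FreeGroup.of (.s i)) = sElt n i := rfl

theorem mk_eq_one_of_rel {w : FreeGroup BGen} (h : BRel n w) :
    PresentedGroup.mk {w | BRel n w} w = 1 :=
  PresentedGroup.one_of_mem h

theorem commute_zElt (x : Bhat n) : Commute (zElt n) x := by
  suffices x ∈ Subgroup.centralizer {zElt n} from
    (Subgroup.mem_centralizer_singleton_iff.mp this).symm
  refine PresentedGroup.generated_by _ _ (fun g => ?_) x
  rw [Subgroup.mem_centralizer_singleton_iff, eq_comm, ← commutatorElement_eq_one_iff_mul_comm]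
  have hg : PresentedGroup.mk {w | BRel n w} (FreeGroup.of g) = PresentedGroup.of g := rfl
  simpa [commutatorElement_def, hg] using mk_eq_one_of_rel (BRel.zcentral (n := n) g)

theorem aElt_eq_one {i : ℕ} (h : n ≤ i) : aElt n i = 1 :=
  mk_eq_one_of_rel (.akill i h)

theorem sElt_eq_one {i : ℕ} (h : n ≤ i + 1) : sElt n i = 1 :=
  mk_eq_one_of_rel (.skill i h)

theorem sElt_mul_self {i : ℕ} (h : i + 1 < n) : sElt n i * sElt n i = 1 :=
  mk_eq_one_of_rel (.ssq i h)

theorem aElt_mul_self {i : ℕ} (h : i < n) : aElt n i * aElt n i = zElt n := by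
  simpa [mul_inv_eq_one] using mk_eq_one_of_rel (.asq i h)

theorem aElt_mul_aElt {i j : ℕ} (hij : i ≠ j) (hi : i < n) (hj : j < n) :
    aElt n i * aElt n j = zElt n * aElt n j * aElt n i := by
  have h := mk_eq_one_of_rel (.aswap i j hij hi hj)
  simpa only [map_mul, map_inv, mk_of_z, mk_of_a, mul_inv_eq_one] using h

theorem sElt_mul_aElt_self {i : ℕ} (h : i + 1 < n) :
    sElt n i * aElt n i = aElt n (i + 1) * sElt n i := by
  simpa [mul_inv_eq_one, mul_inv_eq_iff_eq_mul] using mk_eq_one_of_rel (.sa1 i h)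

theorem sElt_mul_aElt_succ {i : ℕ} (h : i + 1 < n) :
    sElt n i * aElt n (i + 1) = aElt n i * sElt n i := by
  simpa [mul_inv_eq_one, mul_inv_eq_iff_eq_mul] using mk_eq_one_of_rel (.sa2 i h)

theorem commute_sElt_aElt {i j : ℕ} (h₁ : j ≠ i) (h₂ : j ≠ i + 1) :
    Commute (sElt n i) (aElt n j) := by
  by_cases hi : i + 1 < n
  · by_cases hj : j < n
    · rw [Commute, SemiconjBy, ← commutatorElement_eq_one_iff_mul_comm]
      simpa [commutatorElement_def] using mk_eq_one_of_rel (.sa3 i j hi hj h₁ h₂)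
    · rw [aElt_eq_one (by omega)]
      exact Commute.one_right _
  · rw [sElt_eq_one (by omega)]
    exact Commute.one_left _

theorem commute_sElt_sElt {i j : ℕ} (h : i + 2 ≤ j) : Commute (sElt n i) (sElt n j) := by
  by_cases hj : j + 1 < n
  · rw [Commute, SemiconjBy, ← commutatorElement_eq_one_iff_mul_comm]
    simpa [commutatorElement_def] using mk_eq_one_of_rel (.sfar i j h hj)
  · rw [sElt_eq_one (by omega : n ≤ j + 1)]
    exact Commute.one_right _

theorem sElt_braid {i : ℕ} (h : i + 2 < n) :
    sElt n i * sElt n (i + 1) * sElt n i = sElt n (i + 1) * sElt n i * sElt n (i + 1) := by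
  have hcube : (sElt n i * sElt n (i + 1)) ^ 3 = 1 := by
    simpa using mk_eq_one_of_rel (.braid i h)
  have hinv (j : ℕ) (hj : j + 1 < n) : (sElt n j)⁻¹ = sElt n j :=
    inv_eq_of_mul_eq_one_right (sElt_mul_self hj)
  calc sElt n i * sElt n (i + 1) * sElt n i
      = (sElt n i * sElt n (i + 1)) ^ 3 *
          ((sElt n (i + 1))⁻¹ * (sElt n i)⁻¹ * (sElt n (i + 1))⁻¹) := by
        simp only [pow_succ, pow_zero, one_mul]
        group
    _ = sElt n (i + 1) * sElt n i * sElt n (i + 1) := by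
        rw [hcube, one_mul, hinv i (by omega), hinv (i + 1) (by omega)]

theorem sProd_of_le {i m : ℕ} (h : m ≤ i) : sProd n i m = 1 := by
  simp [sProd, Nat.sub_eq_zero_of_le h]

theorem sProd_mul_sProd {i k m : ℕ} (hik : i ≤ k) (hkm : k ≤ m) :
    sProd n i k * sProd n k m = sProd n i m := by
  have hlen : m - i = (k - i) + (m - k) := by omega
  simp only [sProd, hlen, List.range_add, List.map_append, List.prod_append, List.map_map]
  congr 3
  funext d
  simp only [Function.comp_apply]
  congr 1
  omega

theorem sProd_succ_self (i : ℕ) : sProd n i (i + 1) = sElt n i := by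
  simp [sProd]

theorem sProd_eq_sElt_mul {i m : ℕ} (h : i < m) :
    sProd n i m = sElt n i * sProd n (i + 1) m := by
  rw [← sProd_mul_sProd (Nat.le_succ i) h, sProd_succ_self]

theorem sProd_succ {i m : ℕ} (h : i ≤ m) : sProd n i (m + 1) = sProd n i m * sElt n m := by
  rw [← sProd_mul_sProd h (Nat.le_succ m), sProd_succ_self]

theorem commute_sElt_sProd {i j m : ℕ} (h : j + 2 ≤ i ∨ m + 1 ≤ j) :
    Commute (sElt n j) (sProd n i m) :=
  Commute.list_prod_right _ _ fun x hx => by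
    obtain ⟨d, hd, rfl⟩ := List.mem_map.mp hx
    rw [List.mem_range] at hd
    rcases h with h | h
    · exact commute_sElt_sElt (by omega)
    · exact (commute_sElt_sElt (by omega)).symm

theorem commute_aElt_sProd {i j m : ℕ} (h : j < i ∨ m < j) :
    Commute (aElt n j) (sProd n i m) :=
  Commute.list_prod_right _ _ fun x hx => by
    obtain ⟨d, hd, rfl⟩ := List.mem_map.mp hx
    rw [List.mem_range] at hd
    exact (commute_sElt_aElt (by omega) (by omega)).symm

theorem aElt_mul_sProd_self {i m : ℕ} (hi : i ≤ m) (hm : m < n) :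
    aElt n i * sProd n i m = sProd n i m * aElt n m := by
  induction m, hi using Nat.le_induction with
  | base => rw [sProd_of_le le_rfl, one_mul, mul_one]
  | succ m hm' ih =>
    rw [sProd_succ hm', ← mul_assoc, ih (by omega), mul_assoc, ← sElt_mul_aElt_succ hm,
      mul_assoc]

theorem aElt_succ_mul_sProd {i j m : ℕ} (hij : i ≤ j) (hjm : j < m) (hj : j + 1 < n) :
    aElt n (j + 1) * sProd n i m = sProd n i m * aElt n j := by
  rw [← sProd_mul_sProd hij hjm.le, sProd_eq_sElt_mul hjm, ← mul_assoc,
    (commute_aElt_sProd (Or.inr (Nat.lt_succ_self j))).eq, mul_assoc, ← mul_assoc (aElt n _),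
    ← sElt_mul_aElt_self hj, mul_assoc (sElt n j),
    (commute_aElt_sProd (Or.inl (Nat.lt_succ_self j))).eq]
  simp only [mul_assoc]

theorem sElt_succ_mul_sProd {i j m : ℕ} (hij : i ≤ j) (hjm : j + 2 ≤ m) (hj : j + 2 < n) :
    sElt n (j + 1) * sProd n i m = sProd n i m * sElt n j := by
  have hleft : Commute (sElt n (j + 1)) (sProd n i j) := commute_sElt_sProd (Or.inr le_rfl)
  have hright : Commute (sElt n j) (sProd n (j + 2) m) := commute_sElt_sProd (Or.inl le_rfl)
  rw [← sProd_mul_sProd hij (by omega), sProd_eq_sElt_mul (by omega : j < m),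
    sProd_eq_sElt_mul (by omega : j + 1 < m)]
  calc sElt n (j + 1) * (sProd n i j * (sElt n j * (sElt n (j + 1) * sProd n (j + 2) m)))
      = sProd n i j * (sElt n (j + 1) * sElt n j * sElt n (j + 1)) * sProd n (j + 2) m := by
        rw [← mul_assoc, hleft.eq]
        simp only [mul_assoc]
    _ = sProd n i j * (sElt n j * sElt n (j + 1) * sElt n j) * sProd n (j + 2) m := by
        rw [sElt_braid hj]
    _ = sProd n i j * (sElt n j * (sElt n (j + 1) * sProd n (j + 2) m)) * sElt n j := by
        simp only [mul_assoc, hright.eq]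

theorem zElt_mem_bhatPrev : zElt n ∈ BhatPrev n :=
  Subgroup.subset_closure (Or.inl (Or.inl rfl))

theorem aElt_mem_bhatPrev {i : ℕ} (h : i < n - 1) : aElt n i ∈ BhatPrev n :=
  Subgroup.subset_closure (Or.inl (Or.inr ⟨i, h, rfl⟩))

theorem sElt_mem_bhatPrev {i : ℕ} (h : i + 1 < n - 1) : sElt n i ∈ BhatPrev n :=
  Subgroup.subset_closure (Or.inr ⟨i, h, rfl⟩)

theorem inv_aElt_mul_mul_mem_bhatPrev {h : Bhat n} (hh : h ∈ BhatPrev n) :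
    (aElt n (n - 1))⁻¹ * h * aElt n (n - 1) ∈ BhatPrev n := by
  set A := aElt n (n - 1)
  suffices BhatPrev n ≤ (BhatPrev n).comap (MulAut.conj A⁻¹).toMonoidHom by
    simpa using this hh
  refine (Subgroup.closure_le _).mpr ?_
  rintro x ((rfl | ⟨i, hi, rfl⟩) | ⟨i, hi, rfl⟩) <;>
    simp only [SetLike.mem_coe, Subgroup.mem_comap, MulEquiv.coe_toMonoidHom, MulAut.conj_apply,
      inv_inv]
  · rw [(commute_zElt A⁻¹).symm.eq, inv_mul_cancel_right]
    exact zElt_mem_bhatPrev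
  · rw [mul_assoc, aElt_mul_aElt (by omega) (by omega) (by omega), (commute_zElt A).eq, mul_assoc,
      inv_mul_cancel_left]
    exact mul_mem zElt_mem_bhatPrev (aElt_mem_bhatPrev hi)
  · rw [mul_assoc, (commute_sElt_aElt (by omega) (by omega)).eq, inv_mul_cancel_left]
    exact sElt_mem_bhatPrev hi

theorem mk_sProd_mul_mul_eq_cosetRep {h : Bhat n} (hh : h ∈ BhatPrev n) (p : Fin n × Bool) :
    ((sProd n p.1 (n - 1) * h * aElt n (n - 1) ^ cond p.2 1 0 : Bhat n) : Bhat n ⧸ BhatPrev n) =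
      cosetRep n p := by
  obtain ⟨i, _ | _⟩ := p
  · simpa [cosetRep] using QuotientGroup.mk_mul_of_mem _ hh
  · simp only [cosetRep, cond_true, pow_one]
    rw [show sProd n i (n - 1) * h * aElt n (n - 1) =
        sProd n i (n - 1) * aElt n (n - 1) * ((aElt n (n - 1))⁻¹ * h * aElt n (n - 1)) by group]
    exact QuotientGroup.mk_mul_of_mem _ (inv_aElt_mul_mul_mem_bhatPrev hh)

theorem exists_mk_zElt_mul_cosetRep (p : Fin n × Bool) :
    ∃ q, ((zElt n * cosetRep n p : Bhat n) : Bhat n ⧸ BhatPrev n) = cosetRep n q :=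
  ⟨p, by rw [(commute_zElt _).eq]; exact QuotientGroup.mk_mul_of_mem _ zElt_mem_bhatPrev⟩

theorem exists_mk_sElt_mul_cosetRep (j : ℕ) (p : Fin n × Bool) :
    ∃ q, ((sElt n j * cosetRep n p : Bhat n) : Bhat n ⧸ BhatPrev n) = cosetRep n q := by
  by_cases hj : j + 1 < n
  swap
  · exact ⟨p, by rw [sElt_eq_one (by omega), one_mul]⟩
  obtain ⟨⟨i, hi⟩, ε⟩ := p
  simp only [cosetRep, ← mul_assoc]
  obtain h | rfl | rfl | h : j + 2 ≤ i ∨ j + 1 = i ∨ j = i ∨ i < j := by omega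
  · refine ⟨(⟨i, hi⟩, ε), ?_⟩
    rw [(commute_sElt_sProd (Or.inl h)).eq]
    exact mk_sProd_mul_mul_eq_cosetRep (sElt_mem_bhatPrev (n := n) (i := j) (by omega))
      (⟨i, hi⟩, ε)
  · refine ⟨(⟨j, by omega⟩, ε), ?_⟩
    rw [← sProd_eq_sElt_mul (by omega)]
  · refine ⟨(⟨j + 1, hj⟩, ε), ?_⟩
    rw [sProd_eq_sElt_mul (by omega), ← mul_assoc, sElt_mul_self hj, one_mul]
  · obtain ⟨k, rfl⟩ : ∃ k, j = k + 1 := ⟨j - 1, by omega⟩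
    refine ⟨(⟨i, hi⟩, ε), ?_⟩
    rw [sElt_succ_mul_sProd (by omega) (by omega) (by omega)]
    exact mk_sProd_mul_mul_eq_cosetRep (sElt_mem_bhatPrev (by omega)) (⟨i, hi⟩, ε)

theorem exists_mk_aElt_mul_cosetRep (j : ℕ) (p : Fin n × Bool) :
    ∃ q, ((aElt n j * cosetRep n p : Bhat n) : Bhat n ⧸ BhatPrev n) = cosetRep n q := by
  by_cases hj : j < n
  swap
  · exact ⟨p, by rw [aElt_eq_one (by omega), one_mul]⟩
  obtain ⟨⟨i, hi⟩, ε⟩ := p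
  simp only [cosetRep, ← mul_assoc]
  obtain h | rfl | h : j < i ∨ j = i ∨ i < j := by omega
  · refine ⟨(⟨i, hi⟩, ε), ?_⟩
    rw [(commute_aElt_sProd (Or.inl h)).eq]
    exact mk_sProd_mul_mul_eq_cosetRep (aElt_mem_bhatPrev (n := n) (i := j) (by omega))
      (⟨i, hi⟩, ε)
  · rw [aElt_mul_sProd_self (by omega) (by omega)]
    cases ε
    · exact ⟨(⟨j, hi⟩, true), by simp⟩
    · refine ⟨(⟨j, hi⟩, false), ?_⟩
      rw [cond_true, pow_one, mul_assoc, aElt_mul_self (by omega)]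
      simpa [cosetRep] using mk_sProd_mul_mul_eq_cosetRep zElt_mem_bhatPrev (⟨j, hi⟩, false)
  · obtain ⟨k, rfl⟩ : ∃ k, j = k + 1 := ⟨j - 1, by omega⟩
    refine ⟨(⟨i, hi⟩, ε), ?_⟩
    rw [aElt_succ_mul_sProd (by omega) (by omega) (by omega)]
    exact mk_sProd_mul_mul_eq_cosetRep (aElt_mem_bhatPrev (by omega)) (⟨i, hi⟩, ε)

open Pointwise in
theorem surjective_mk_cosetRep (hn : 0 < n) :
    Function.Surjective fun p : Fin n × Bool => (cosetRep n p : Bhat n ⧸ BhatPrev n) := by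
  set C := Set.range fun p : Fin n × Bool => (cosetRep n p : Bhat n ⧸ BhatPrev n)
  have hgen (g : BGen) : (PresentedGroup.of g : Bhat n) • C ⊆ C := by
    rintro _ ⟨_, ⟨p, rfl⟩, rfl⟩
    obtain ⟨q, hq⟩ : ∃ q,
        ((PresentedGroup.of g * cosetRep n p : Bhat n) : Bhat n ⧸ BhatPrev n) = cosetRep n q := by
      cases g with
      | z => exact exists_mk_zElt_mul_cosetRep p
      | a j => exact exists_mk_aElt_mul_cosetRep j p
      | s j => exact exists_mk_sElt_mul_cosetRep j p
    exact ⟨q, hq.symm⟩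
  have hC (x : Bhat n) : x • C = C :=
    smul_set_eq_self_of_closure_eq_top (PresentedGroup.closure_range_of _) (Set.finite_range _)
      (by rintro _ ⟨g, rfl⟩; exact hgen g) x
  have hone : ((1 : Bhat n) : Bhat n ⧸ BhatPrev n) ∈ C :=
    ⟨(⟨n - 1, by omega⟩, false), by simp [cosetRep, sProd_of_le]⟩
  intro c
  obtain ⟨x, rfl⟩ := QuotientGroup.mk_surjective c
  have hx : ((x : Bhat n) : Bhat n ⧸ BhatPrev n) ∈ C := by
    simpa [hC x] using Set.smul_mem_smul_set (a := x) hone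
  exact hx

def signedPermOfGen (n : ℕ) : BGen → Perm (ℕ × Bool)
  | .z => 1
  | .a i => if i < n then swap (i, false) (i, true) else 1
  | .s i => if i + 1 < n then Perm.prodCongrReflHom ℕ Bool (swap i (i + 1)) else 1

theorem lift_signedPermOfGen_of_rel {r : FreeGroup BGen} (hr : BRel n r) :
    FreeGroup.lift (signedPermOfGen n) r = 1 := by
  have conj {x y w : Perm (ℕ × Bool)} (h : x * y = w * x) : x * y * x⁻¹ * w⁻¹ = 1 := by
    rw [h]; group
  cases hr with
  | zsq => simp [signedPermOfGen]
  | zcentral g => simp [signedPermOfGen]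
  | asq i h => simp [signedPermOfGen, h]
  | aswap i j hij hi hj =>
    simp only [map_mul, map_inv, FreeGroup.lift_apply_of, signedPermOfGen, if_pos hi, if_pos hj,
      one_mul, mul_inv_eq_one]
    exact swap_mul_swap_comm (by simp [hij.symm]) (by simp [hij.symm]) (by simp [hij.symm])
      (by simp [hij.symm])
  | ssq i h =>
    simp only [map_mul, FreeGroup.lift_apply_of, signedPermOfGen, if_pos h]
    rw [← map_mul, swap_mul_self, map_one]
  | braid i h =>
    simp only [map_pow, map_mul, FreeGroup.lift_apply_of, signedPermOfGen,
      if_pos (by omega : i + 1 < n), if_pos (by omega : i + 1 + 1 < n)]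
    rw [← map_mul, ← map_pow, swap_mul_swap_pow_three (by omega) (by omega) (by omega), map_one]
  | sfar i j hij hj =>
    simp only [map_mul, map_inv, FreeGroup.lift_apply_of, signedPermOfGen,
      if_pos (by omega : i + 1 < n), if_pos hj]
    refine conj ?_
    rw [← map_mul, ← map_mul, swap_mul_swap_comm (by omega) (by omega) (by omega) (by omega)]
  | sa1 i h =>
    simp only [map_mul, map_inv, FreeGroup.lift_apply_of, signedPermOfGen, if_pos h,
      if_pos (by omega : i < n)]
    refine conj ?_
    rw [mul_swap_eq_swap_mul]
    simp
  | sa2 i h =>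
    simp only [map_mul, map_inv, FreeGroup.lift_apply_of, signedPermOfGen, if_pos h,
      if_pos (by omega : i < n)]
    refine conj ?_
    rw [mul_swap_eq_swap_mul]
    simp
  | sa3 i j h hj h₁ h₂ =>
    simp only [map_mul, map_inv, FreeGroup.lift_apply_of, signedPermOfGen, if_pos h, if_pos hj]
    refine conj ?_
    rw [mul_swap_eq_swap_mul]
    simp [swap_apply_of_ne_of_ne h₁ h₂]
  | akill i h => simp [signedPermOfGen, not_lt.mpr h]
  | skill i h => simp [signedPermOfGen, not_lt.mpr h]

def toSignedPerm (n : ℕ) : Bhat n →* Perm (ℕ × Bool) :=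
  PresentedGroup.toGroup fun _ hr => lift_signedPermOfGen_of_rel hr

theorem toSignedPerm_of (g : BGen) : toSignedPerm n (PresentedGroup.of g) = signedPermOfGen n g :=
  PresentedGroup.toGroup.of _

theorem toSignedPerm_apply_of_mem {h : Bhat n} (hh : h ∈ BhatPrev n) :
    toSignedPerm n h (n - 1, false) = (n - 1, false) := by
  suffices BhatPrev n ≤
      (MulAction.stabilizer (Perm (ℕ × Bool)) (n - 1, false)).comap (toSignedPerm n) from this hh
  refine (Subgroup.closure_le _).mpr ?_
  rintro _ ((rfl | ⟨i, hi, rfl⟩) | ⟨i, hi, rfl⟩) <;>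
    simp only [SetLike.mem_coe, Subgroup.mem_comap, MulAction.mem_stabilizer_iff, Perm.smul_def]
  · simp [zElt, toSignedPerm_of, signedPermOfGen]
  · simp only [aElt, toSignedPerm_of, signedPermOfGen, if_pos (show i < n by omega)]
    exact swap_apply_of_ne_of_ne (by simp; omega) (by simp)
  · simp [sElt, toSignedPerm_of, signedPermOfGen, show i + 1 < n by omega,
      swap_apply_of_ne_of_ne (show n - 1 ≠ i by omega) (show n - 1 ≠ i + 1 by omega)]

theorem toSignedPerm_sProd_apply {i m : ℕ} (hi : i ≤ m) (hm : m < n) (b : Bool) :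
    toSignedPerm n (sProd n i m) (m, b) = (i, b) := by
  induction m, hi using Nat.le_induction with
  | base => simp [sProd_of_le]
  | succ m hm' ih =>
    rw [sProd_succ hm', map_mul, Perm.mul_apply, sElt, toSignedPerm_of]
    simp [signedPermOfGen, hm, ih (by omega)]

theorem toSignedPerm_cosetRep_apply (p : Fin n × Bool) :
    toSignedPerm n (cosetRep n p) (n - 1, false) = ((p.1 : ℕ), p.2) := by
  obtain ⟨⟨i, hi⟩, _ | _⟩ := p
  · simpa [cosetRep] using
      toSignedPerm_sProd_apply (n := n) (i := i) (m := n - 1) (by omega) (by omega) false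
  · simpa [cosetRep, aElt, toSignedPerm_of, signedPermOfGen, show n - 1 < n by omega]
      using toSignedPerm_sProd_apply (n := n) (i := i) (m := n - 1) (by omega) (by omega) true

theorem injective_mk_cosetRep :
    Function.Injective fun p : Fin n × Bool => (cosetRep n p : Bhat n ⧸ BhatPrev n) :=
  injective_mk_of_injective_apply (toSignedPerm n) (fun _ => toSignedPerm_apply_of_mem)
    fun p q hpq => by simpa [toSignedPerm_cosetRep_apply, Prod.ext_iff, Fin.ext_iff] using hpq

end Bhat

/-- for `n ≥ 2`, the `2n` elements `s_i ⋯ s_{n-1} a_n^ε`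
(`1 ≤ i ≤ n`, `ε ∈ {0,1}`) form a complete set of left coset representatives of
`B̂_{n-1}` in `B̂_n`, i.e. the map `(i,ε) ↦ (s_i⋯s_{n-1}a_n^ε)·B̂_{n-1}` is a
bijection onto the set of left cosets. -/
theorem coset_representatives (n : ℕ) (hn : 2 ≤ n) :
    Function.Bijective
      (fun p : Fin n × Bool => (QuotientGroup.mk (cosetRep n p) : Bhat n ⧸ BhatPrev n)) :=
  ⟨Bhat.injective_mk_cosetRep, Bhat.surjective_mk_cosetRep (by omega)⟩
end

section
/- Let λ be a strict partition of n and ν a strict partition of n−1. Then the down transition function of the Schur graph satisfies p↓(λ,ν) = [L^ν : Res L^λ] · dim(L^ν)/dim(L^λ), where [L^ν : Res L^λ] is the multiplicity of the simple S_{n−1}-supermodule L^ν in the restriction of L^λ to S_{n−1}. -/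
/-!
Both sides equal `f_ν / f_λ`, where `f` counts standard shifted tableaux.
For the Schur graph this rests on `g_λ = 2^(|λ| - ℓ(λ)) f_λ`: the largest entry of a standard
shifted tableau sits at the end of a removable row, so `f_λ` is the sum of `f_ν` over the `ν`
obtained by deleting such a cell, which is the path recursion for `g` once the edge weight
`κ(ν, λ)` (`2` when the row survives, `1` when it disappears) is absorbed into the power of two.
On the representation side `[L^ν : Res L^λ]` absorbs the powers of two in the dimensions in the
same way.
-/

def shiftedCells (l : List ℕ) : Finset (ℕ × ℕ) :=
  (Finset.range l.length).biUnion fun i =>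
    (Finset.Ico i (i + l.getD i 0)).image fun j => (i, j)

def IsSP (l : List ℕ) : Prop := l.Pairwise (· > ·) ∧ ∀ x ∈ l, 0 < x

def IsStrictPartition (l : List ℕ) (n : ℕ) : Prop := IsSP l ∧ l.sum = n

def STab (l : List ℕ) : Type :=
  {T : {c : ℕ × ℕ // c ∈ shiftedCells l} ≃ Fin l.sum //
    (∀ a b : {c : ℕ × ℕ // c ∈ shiftedCells l},
        a.1.1 = b.1.1 → a.1.2 < b.1.2 → T a < T b) ∧
    (∀ a b : {c : ℕ × ℕ // c ∈ shiftedCells l},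
        a.1.2 = b.1.2 → a.1.1 < b.1.1 → T a < T b)}

/-- Remove a cell from row `i` (dropping the row if it becomes empty). -/
def removeCell (l : List ℕ) (i : ℕ) : List ℕ :=
  (l.set i (l.getD i 0 - 1)).filter (fun x => x != 0)

/-- Add a cell to row `i` (appending a new row of size 1 when `i = l.length`). -/
def addCell (l : List ℕ) (i : ℕ) : List ℕ :=
  if i < l.length then l.set i (l.getD i 0 + 1) else l ++ [1]

open Classical in
/-- Edge multiplicity of the Schur graph: `2` if `λ` is obtained from `ν` by adding
one cell without changing the number of rows, `1` if the number of rows grows by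
one, `0` otherwise. -/
noncomputable def kappa (ν l : List ℕ) : ℕ :=
  if IsSP ν ∧ IsSP l ∧ shiftedCells ν ⊆ shiftedCells l ∧
      (shiftedCells l).card = (shiftedCells ν).card + 1 then
    (if ν.length = l.length then 2 else 1)
  else 0

/-- Number of paths (with edge multiplicity) of length `n` from `∅` to `l` in the
Schur graph. -/
noncomputable def schurG : ℕ → List ℕ → ℕ
  | 0, l => if l = [] then 1 else 0
  | n + 1, l => ∑ i ∈ Finset.range l.length,
      kappa (removeCell l i) l * schurG n (removeCell l i)

/-- `g_λ`, the number of paths from `∅` to `λ` in the Schur graph. -/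
noncomputable def gP (l : List ℕ) : ℕ := schurG l.sum l

/-- Down transition function of the Schur graph. -/
noncomputable def pDown (l ν : List ℕ) : ℚ := ((gP ν : ℚ) / (gP l : ℚ)) * (kappa ν l : ℚ)

/-- Up transition function of the Schur graph. -/
noncomputable def pUp (ν l : List ℕ) : ℚ := (gP l : ℚ) / ((gP ν : ℚ) * ((ν.sum : ℚ) + 1))

/-- Plancherel measure. -/
noncomputable def MPl (l : List ℕ) : ℚ :=
  (2 : ℚ) ^ ((l.length : ℤ) - (l.sum : ℤ)) * (gP l : ℚ) ^ 2 / (Nat.factorial l.sum : ℚ)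


/-- `δ(λ)`: the parity of the number of parts. -/
def deltaP (l : List ℕ) : ℕ := l.length % 2

/-- The branching multiplicity `[L^ν : Res L^λ]` of simple Sergeev supermodules:
`2^{(2+ℓ(ν)-δ(ν)-ℓ(λ)+δ(λ))/2}` when `λ` is obtained from `ν` by adding one cell,
and `0` otherwise. -/
noncomputable def branchMult (l ν : List ℕ) : ℕ :=
  if kappa ν l ≠ 0 then 2 ^ ((2 + ν.length + deltaP l - (deltaP ν + l.length)) / 2) else 0

/-- The dimension of the simple Sergeev `S_m`-supermodule indexed by a strict
partition `l` of `m`: `2^{m - (ℓ(λ)-δ(λ))/2} f_λ`. -/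
noncomputable def dimL (m : ℕ) (l : List ℕ) : ℕ :=
  2 ^ (m - (l.length - deltaP l) / 2) * Nat.card (STab l)

section IncreasingLabeling

variable {γ : Type*} (R : γ → γ → Prop)

def IncreasingLabeling (S : Finset γ) (n : ℕ) : Type _ :=
  {T : S ≃ Fin n // ∀ a b : S, R a.1 b.1 → T a < T b}

instance (S : Finset γ) (n : ℕ) : Finite (IncreasingLabeling R S n) := by
  unfold IncreasingLabeling; infer_instance

variable {R}

namespace IncreasingLabeling

variable {S : Finset γ} {m : ℕ}

theorem card_empty : Nat.card (IncreasingLabeling R (∅ : Finset γ) 0) = 1 :=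
  Nat.card_eq_one_iff_unique.2
    ⟨⟨fun _ _ => Subtype.ext (Equiv.ext fun a => absurd a.2 (Finset.notMem_empty _))⟩,
      ⟨⟨Equiv.equivOfIsEmpty _ _, fun a => absurd a.2 (Finset.notMem_empty _)⟩⟩⟩

def top (T : IncreasingLabeling R S (m + 1)) : γ := (T.1.symm (Fin.last m)).1

theorem top_mem (T : IncreasingLabeling R S (m + 1)) : T.top ∈ S := (T.1.symm _).2

theorem apply_top (T : IncreasingLabeling R S (m + 1)) : T.1 ⟨T.top, T.top_mem⟩ = Fin.last m :=
  T.1.apply_symm_apply _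

theorem not_rel_top (T : IncreasingLabeling R S (m + 1)) : ∀ b ∈ S, ¬ R T.top b := by
  intro b hb hR
  have := T.2 ⟨T.top, T.top_mem⟩ ⟨b, hb⟩ hR
  rw [apply_top] at this
  exact (Fin.le_last _).not_gt this

variable [DecidableEq γ]

def extend {c : γ} (hc : c ∈ S) (hmax : ∀ b ∈ S, ¬ R c b)
    (T : IncreasingLabeling R (S.erase c) m) : IncreasingLabeling R S (m + 1) where
  val :=
    { toFun := fun x => if h : x.1 = c then Fin.last m
        else (T.1 ⟨x.1, Finset.mem_erase.2 ⟨h, x.2⟩⟩).castSucc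
      invFun := fun y => if h : y = Fin.last m then ⟨c, hc⟩
        else ⟨(T.1.symm (y.castPred h)).1, Finset.mem_of_mem_erase (T.1.symm _).2⟩
      left_inv := by
        rintro ⟨x, hx⟩
        by_cases h : x = c
        · subst h; simp
        · simp [h, (Fin.castSucc_lt_last _).ne]
      right_inv := by
        intro y
        by_cases h : y = Fin.last m
        · simp [h]
        · have hne : (T.1.symm (y.castPred h)).1 ≠ c :=
            (Finset.mem_erase.1 (T.1.symm _).2).1
          simp [h, hne] }
  property := by
    rintro ⟨a, ha⟩ ⟨b, hb⟩ hab
    have ha' : a ≠ c := by rintro rfl; exact hmax b hb hab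
    by_cases hb' : b = c
    · simp [ha', hb']
    · simpa [ha', hb'] using
        T.2 ⟨a, Finset.mem_erase.2 ⟨ha', ha⟩⟩ ⟨b, Finset.mem_erase.2 ⟨hb', hb⟩⟩ hab

theorem extend_apply_self {c : γ} (hc : c ∈ S) (hmax : ∀ b ∈ S, ¬ R c b)
    (T : IncreasingLabeling R (S.erase c) m) : (extend hc hmax T).1 ⟨c, hc⟩ = Fin.last m := by
  simp [extend]

theorem extend_apply_of_mem_erase {c : γ} (hc : c ∈ S) (hmax : ∀ b ∈ S, ¬ R c b)
    (T : IncreasingLabeling R (S.erase c) m) {x : γ} (hx : x ∈ S.erase c) :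
    (extend hc hmax T).1 ⟨x, Finset.mem_of_mem_erase hx⟩ = (T.1 ⟨x, hx⟩).castSucc := by
  simp [extend, (Finset.mem_erase.1 hx).1]

theorem apply_ne_last (T : IncreasingLabeling R S (m + 1)) {x : γ} (hx : x ∈ S.erase T.top) :
    T.1 ⟨x, Finset.mem_of_mem_erase hx⟩ ≠ Fin.last m := by
  intro h
  exact (Finset.mem_erase.1 hx).1 (congrArg Subtype.val (T.1.injective (h.trans T.apply_top.symm)))

def restrict (T : IncreasingLabeling R S (m + 1)) : IncreasingLabeling R (S.erase T.top) m where
  val :=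
    { toFun := fun x => (T.1 ⟨x.1, Finset.mem_of_mem_erase x.2⟩).castPred (T.apply_ne_last x.2)
      invFun := fun y => ⟨(T.1.symm y.castSucc).1, Finset.mem_erase.2
        ⟨fun h => (Fin.castSucc_lt_last y).ne (by rw [← T.apply_top]; simp [← h]),
          (T.1.symm _).2⟩⟩
      left_inv := fun x => by simp
      right_inv := fun y => by simp }
  property := fun a b hab => by
    simpa [Fin.castPred_lt_castPred_iff] using
      T.2 ⟨a.1, Finset.mem_of_mem_erase a.2⟩ ⟨b.1, Finset.mem_of_mem_erase b.2⟩ hab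

theorem extend_restrict (T : IncreasingLabeling R S (m + 1)) :
    extend T.top_mem T.not_rel_top T.restrict = T := by
  refine Subtype.ext (Equiv.ext fun ⟨x, hx⟩ => ?_)
  by_cases h : x = T.top
  · subst h; rw [extend_apply_self, apply_top]
  · rw [extend_apply_of_mem_erase _ _ _ (Finset.mem_erase.2 ⟨h, hx⟩)]
    simp [restrict]

variable [DecidableRel R]

def ofSigma
    (p : Σ c : {c // c ∈ {c ∈ S | ∀ b ∈ S, ¬ R c b}}, IncreasingLabeling R (S.erase c.1) m) :
    IncreasingLabeling R S (m + 1) :=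
  extend (Finset.mem_filter.1 p.1.2).1 (Finset.mem_filter.1 p.1.2).2 p.2

theorem ofSigma_injective : Function.Injective (ofSigma (R := R) (S := S) (m := m)) := by
  rintro ⟨⟨c, hc⟩, T⟩ ⟨⟨d, hd⟩, T'⟩ h
  have hcd : c = d := by
    have := congrArg (fun T : IncreasingLabeling R S (m + 1) => (T.1.symm (Fin.last m)).1) h
    simpa [ofSigma, extend] using this
  subst hcd
  have hTT : T = T' := by
    refine Subtype.ext (Equiv.ext fun ⟨x, hx⟩ => Fin.castSucc_injective m ?_)
    have := congrArg (fun T : IncreasingLabeling R S (m + 1) =>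
      T.1 ⟨x, Finset.mem_of_mem_erase hx⟩) h
    simpa only [ofSigma, extend_apply_of_mem_erase _ _ _ hx] using this
  rw [hTT]

theorem ofSigma_surjective : Function.Surjective (ofSigma (R := R) (S := S) (m := m)) :=
  fun T =>
    ⟨⟨⟨T.top, Finset.mem_filter.2 ⟨T.top_mem, T.not_rel_top⟩⟩, T.restrict⟩, T.extend_restrict⟩

theorem card_succ :
    Nat.card (IncreasingLabeling R S (m + 1)) =
      ∑ c ∈ S with ∀ b ∈ S, ¬ R c b, Nat.card (IncreasingLabeling R (S.erase c) m) := by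
  rw [← Nat.card_eq_of_bijective _ ⟨ofSigma_injective, ofSigma_surjective⟩, Nat.card_sigma,
    Finset.sum_coe_sort _ fun c => Nat.card (IncreasingLabeling R (S.erase c) m)]

end IncreasingLabeling
end IncreasingLabeling

theorem mem_shiftedCells {l : List ℕ} {c : ℕ × ℕ} :
    c ∈ shiftedCells l ↔ c.1 ≤ c.2 ∧ c.2 < c.1 + l.getD c.1 0 := by
  simp only [shiftedCells, Finset.mem_biUnion, Finset.mem_range, Finset.mem_image, Finset.mem_Ico]
  constructor
  · rintro ⟨i, -, j, hj, rfl⟩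
    exact hj
  · rintro ⟨h₁, h₂⟩
    refine ⟨c.1, ?_, c.2, ⟨h₁, h₂⟩, rfl⟩
    by_contra h
    rw [List.getD_eq_default _ _ (not_lt.1 h)] at h₂
    omega

theorem sum_range_getD (l : List ℕ) : ∑ i ∈ Finset.range l.length, l.getD i 0 = l.sum := by
  induction l with
  | nil => simp
  | cons a t ih =>
    rw [List.length_cons, Finset.sum_range_succ']
    simp only [List.getD_cons_succ, List.getD_cons_zero, List.sum_cons, ih]
    omega

theorem card_shiftedCells (l : List ℕ) : (shiftedCells l).card = l.sum := by
  rw [shiftedCells, Finset.card_biUnion, ← sum_range_getD]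
  · refine Finset.sum_congr rfl fun i _ => ?_
    rw [Finset.card_image_of_injective _ fun a b h => (Prod.mk.inj h).2, Nat.card_Ico]
    omega
  · intro x _ y _ hxy
    simp only [Finset.disjoint_left, Finset.mem_image]
    rintro c ⟨j, -, rfl⟩ ⟨k, -, h⟩
    exact hxy (Prod.mk.inj h).1.symm

theorem getD_pos_iff {l : List ℕ} (hl : ∀ x ∈ l, 0 < x) {i : ℕ} :
    0 < l.getD i 0 ↔ i < l.length := by
  refine ⟨fun h => not_le.1 fun hi => ?_, fun hi => ?_⟩
  · rw [List.getD_eq_default _ _ hi] at h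
    exact h.false
  · rw [List.getD_eq_getElem _ _ hi]
    exact hl _ (l.getElem_mem hi)

theorem diag_mem_shiftedCells {l : List ℕ} (hl : ∀ x ∈ l, 0 < x) {j : ℕ} :
    (j, j) ∈ shiftedCells l ↔ j < l.length := by
  rw [mem_shiftedCells, ← getD_pos_iff hl]
  dsimp only
  omega

theorem getD_add_add_le {l : List ℕ} (hl : l.Pairwise (· > ·)) {i k : ℕ}
    (h : i + k < l.length) : l.getD (i + k) 0 + k ≤ l.getD i 0 := by
  induction k with
  | zero => simp
  | succ k ih =>
    rw [show i + (k + 1) = i + k + 1 by omega] at h ⊢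
    have hlt : l.getD (i + k + 1) 0 < l.getD (i + k) 0 := by
      rw [List.getD_eq_getElem _ _ h, List.getD_eq_getElem _ _ (by omega)]
      exact List.pairwise_iff_getElem.1 hl _ _ (by omega) h (by omega)
    have := ih (by omega)
    omega

theorem getD_lt_getD {l : List ℕ} (hl : l.Pairwise (· > ·)) {i j : ℕ} (hij : i < j)
    (hj : j < l.length) : l.getD j 0 < l.getD i 0 := by
  have := getD_add_add_le hl (i := i) (k := j - i) (by omega)
  rw [Nat.add_sub_cancel' hij.le] at this
  omega

theorem getD_set_self_sub_one (l : List ℕ) (i j : ℕ) :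
    (l.set i (l.getD i 0 - 1)).getD j 0 = if j = i then l.getD i 0 - 1 else l.getD j 0 := by
  split_ifs with hj
  · subst hj
    by_cases hi : j < l.length
    · rw [List.getD_eq_getElem _ _ (by simpa using hi), List.getElem_set_self]
    · rw [List.set_eq_of_length_le (not_lt.1 hi), List.getD_eq_default _ _ (not_lt.1 hi)]
  · simp only [List.getD_eq_getElem?_getD, List.getElem?_set_ne (Ne.symm hj)]

theorem getD_filter_ne_zero {L : List ℕ} (hL : L.Pairwise (· ≥ ·)) (j : ℕ) :
    (L.filter (· != 0)).getD j 0 = L.getD j 0 := by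
  induction L generalizing j with
  | nil => rfl
  | cons a t ih =>
    obtain ⟨ha, ht⟩ := List.pairwise_cons.1 hL
    by_cases h0 : a = 0
    · have hzero : ∀ x ∈ t, x = 0 := fun x hx => by have := ha x hx; omega
      rw [List.filter_cons_of_neg (by simp [h0]), List.filter_eq_nil_iff.2 (by simpa using hzero)]
      cases j with
      | zero => simp [h0]
      | succ j =>
        rw [List.getD_cons_succ]
        by_cases hj : j < t.length
        · rw [List.getD_eq_getElem _ _ hj, hzero _ (t.getElem_mem hj)]; rfl
        · rw [List.getD_eq_default _ _ (not_lt.1 hj)]; rfl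
    · rw [List.filter_cons_of_pos (by simpa using h0)]
      cases j with
      | zero => rfl
      | succ j => exact ih ht j

theorem List.pairwise_iff_getD {L : List ℕ} {r : ℕ → ℕ → Prop} :
    L.Pairwise r ↔ ∀ a b, a < b → b < L.length → r (L.getD a 0) (L.getD b 0) := by
  rw [List.pairwise_iff_getElem]
  refine ⟨fun h a b hab hb => ?_, fun h a b ha hb hab => ?_⟩
  · rw [List.getD_eq_getElem _ _ hb, List.getD_eq_getElem _ _ (hab.trans hb)]
    exact h a b _ hb hab
  · have := h a b hab hb
    rwa [List.getD_eq_getElem _ _ ha, List.getD_eq_getElem _ _ hb] at this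

theorem pairwise_ge_set_getD_sub_one {l : List ℕ} (hl : l.Pairwise (· > ·)) (i : ℕ) :
    (l.set i (l.getD i 0 - 1)).Pairwise (· ≥ ·) := by
  rw [List.pairwise_iff_getD]
  intro a b hab hb
  rw [List.length_set] at hb
  have := getD_lt_getD hl hab hb
  simp only [getD_set_self_sub_one]
  split_ifs <;> subst_vars <;> omega

def IsRemovableRow (l : List ℕ) (i : ℕ) : Prop :=
  i < l.length ∧ (i + 1 = l.length ∨ l.getD (i + 1) 0 + 1 < l.getD i 0)

instance (l : List ℕ) : DecidablePred (IsRemovableRow l) := fun i => by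
  unfold IsRemovableRow; infer_instance

theorem pairwise_gt_set_getD_sub_one {l : List ℕ} (hl : l.Pairwise (· > ·)) {i : ℕ}
    (hi : IsRemovableRow l i) : (l.set i (l.getD i 0 - 1)).Pairwise (· > ·) := by
  rw [List.pairwise_iff_getD]
  intro a b hab hb
  rw [List.length_set] at hb
  have hba := getD_lt_getD hl hab hb
  have hgap : i + 1 < l.length → l.getD (i + 1) 0 + 1 < l.getD i 0 := by
    rcases hi.2 with h | h <;> omega
  simp only [getD_set_self_sub_one]
  split_ifs <;> subst_vars
  · omega
  · rcases Nat.lt_or_ge (a + 1) b with h | h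
    · have := getD_lt_getD hl h hb
      have := hgap (by omega)
      omega
    · obtain rfl : b = a + 1 := by omega
      have := hgap hb
      omega
  · omega
  · exact hba

theorem getD_removeCell {l : List ℕ} (hl : IsSP l) (i j : ℕ) :
    (removeCell l i).getD j 0 = if j = i then l.getD i 0 - 1 else l.getD j 0 := by
  rw [removeCell, getD_filter_ne_zero (pairwise_ge_set_getD_sub_one hl.1 i),
    getD_set_self_sub_one]

theorem isSP_removeCell_iff {l : List ℕ} (hl : IsSP l) {i : ℕ} (hi : i < l.length) :
    IsSP (removeCell l i) ↔ IsRemovableRow l i := by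
  refine ⟨fun h => ⟨hi, ?_⟩, fun h => ⟨?_, fun x hx => ?_⟩⟩
  · by_contra hnot
    push Not at hnot
    have hi1 : i + 1 < l.length := by omega
    have hlt := getD_lt_getD hl.1 (Nat.lt_succ_self i) hi1
    have hpos := (getD_pos_iff hl.2).2 hi1
    have hr := getD_removeCell hl i
    have hr1 : (removeCell l i).getD (i + 1) 0 = l.getD (i + 1) 0 := by rw [hr, if_neg (by omega)]
    have hlen : i + 1 < (removeCell l i).length := (getD_pos_iff h.2).1 (hr1 ▸ hpos)
    have := getD_lt_getD h.1 (Nat.lt_succ_self i) hlen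
    rw [hr1, hr, if_pos rfl] at this
    omega
  · exact (pairwise_gt_set_getD_sub_one hl.1 h).sublist List.filter_sublist
  · have := (List.mem_filter.1 hx).2
    simp only [bne_iff_ne] at this
    omega

def rowEnd (l : List ℕ) (i : ℕ) : ℕ × ℕ := (i, i + l.getD i 0 - 1)

theorem shiftedCells_removeCell {l : List ℕ} (hl : IsSP l) {i : ℕ} (hi : i < l.length) :
    shiftedCells (removeCell l i) = (shiftedCells l).erase (rowEnd l i) := by
  have hpos := (getD_pos_iff hl.2).2 hi
  ext ⟨a, b⟩
  simp only [Finset.mem_erase, mem_shiftedCells, getD_removeCell hl, rowEnd, ne_eq,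
    Prod.mk.injEq]
  split_ifs with h
  · subst h; omega
  · tauto

theorem sum_removeCell {l : List ℕ} (hl : IsSP l) {i : ℕ} (hi : i < l.length) :
    (removeCell l i).sum = l.sum - 1 := by
  have hmem : rowEnd l i ∈ shiftedCells l := by
    have := (getD_pos_iff hl.2).2 hi
    rw [mem_shiftedCells, rowEnd]
    dsimp only
    omega
  rw [← card_shiftedCells, ← card_shiftedCells, shiftedCells_removeCell hl hi,
    Finset.card_erase_of_mem hmem]

def CellLt (a b : ℕ × ℕ) : Prop := a.1 = b.1 ∧ a.2 < b.2 ∨ a.2 = b.2 ∧ a.1 < b.1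

instance : DecidableRel CellLt := fun a b => by unfold CellLt; infer_instance

theorem rowEnd_mem_shiftedCells {l : List ℕ} (hl : ∀ x ∈ l, 0 < x) {i : ℕ}
    (hi : i < l.length) :
    rowEnd l i ∈ shiftedCells l := by
  have := (getD_pos_iff hl).2 hi
  rw [mem_shiftedCells, rowEnd]
  dsimp only
  omega

theorem forall_not_cellLt_iff {l : List ℕ} (hl : IsSP l) {i j : ℕ}
    (hc : (i, j) ∈ shiftedCells l) :
    (∀ b ∈ shiftedCells l, ¬ CellLt (i, j) b) ↔
      IsRemovableRow l i ∧ j = i + l.getD i 0 - 1 := by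
  have hj := mem_shiftedCells.1 hc
  dsimp only at hj
  have hi : i < l.length := (getD_pos_iff hl.2).1 (by omega)
  constructor
  · intro hmax
    have hjend : j = i + l.getD i 0 - 1 := by
      have := mt (hmax (i, j + 1)) (not_not.2 (Or.inl ⟨rfl, Nat.lt_succ_self j⟩))
      rw [mem_shiftedCells] at this
      dsimp only at this
      omega
    refine ⟨⟨hi, ?_⟩, hjend⟩
    by_contra hnot
    push Not at hnot
    have hi1 : i + 1 < l.length := by omega
    have hout := mt (hmax (i + 1, j)) (not_not.2 (Or.inr ⟨rfl, Nat.lt_succ_self i⟩))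
    rw [mem_shiftedCells] at hout
    dsimp only at hout
    have := getD_lt_getD hl.1 (by omega : i < i + 1) hi1
    have := (getD_pos_iff hl.2).2 hi1
    omega
  · rintro ⟨⟨-, hlast⟩, rfl⟩ ⟨b₁, b₂⟩ hb hlt
    have hb := mem_shiftedCells.1 hb
    dsimp only [CellLt] at hb hlt
    rcases hlt with ⟨rfl, hjb⟩ | ⟨rfl, hib⟩
    · omega
    · have hb₁ : b₁ < l.length := (getD_pos_iff hl.2).1 (by omega)
      have hgap := getD_add_add_le hl.1 (i := i + 1) (k := b₁ - (i + 1)) (by omega)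
      rw [Nat.add_sub_cancel' hib] at hgap
      omega

theorem filter_forall_not_cellLt_eq_image_rowEnd {l : List ℕ} (hl : IsSP l) :
    {c ∈ shiftedCells l | ∀ b ∈ shiftedCells l, ¬ CellLt c b} =
      {i ∈ Finset.range l.length | IsRemovableRow l i}.image (rowEnd l) := by
  ext ⟨i, j⟩
  simp only [Finset.mem_filter, Finset.mem_image, Finset.mem_range, rowEnd, Prod.mk.injEq]
  constructor
  · rintro ⟨hc, hmax⟩
    obtain ⟨hrem, rfl⟩ := (forall_not_cellLt_iff hl hc).1 hmax
    exact ⟨i, ⟨hrem.1, hrem⟩, rfl, rfl⟩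
  · rintro ⟨i, ⟨hi, hrem⟩, rfl, rfl⟩
    have hc := rowEnd_mem_shiftedCells hl.2 hi
    exact ⟨hc, (forall_not_cellLt_iff hl hc).2 ⟨hrem, rfl⟩⟩

def STab.equivIncreasingLabeling (l : List ℕ) :
    STab l ≃ IncreasingLabeling CellLt (shiftedCells l) l.sum :=
  Equiv.subtypeEquivRight fun _ =>
    ⟨fun ⟨hrow, hcol⟩ a b hab => hab.elim (fun h => hrow a b h.1 h.2) fun h => hcol a b h.1 h.2,
      fun h => ⟨fun a b h₁ h₂ => h a b (Or.inl ⟨h₁, h₂⟩),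
        fun a b h₁ h₂ => h a b (Or.inr ⟨h₁, h₂⟩)⟩⟩

theorem card_STab_nil : Nat.card (STab []) = 1 := by
  rw [Nat.card_congr (STab.equivIncreasingLabeling [])]
  exact IncreasingLabeling.card_empty

theorem card_STab_eq_sum {l : List ℕ} (hl : IsSP l) {m : ℕ} (hsum : l.sum = m + 1) :
    Nat.card (STab l) =
      ∑ i ∈ Finset.range l.length with IsRemovableRow l i,
        Nat.card (STab (removeCell l i)) := by
  rw [Nat.card_congr (STab.equivIncreasingLabeling l), hsum, IncreasingLabeling.card_succ,
    filter_forall_not_cellLt_eq_image_rowEnd hl, Finset.sum_image fun i _ j _ h => congrArg Prod.fst h]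
  refine Finset.sum_congr rfl fun i hi => ?_
  have hi := Finset.mem_range.1 (Finset.mem_filter.1 hi).1
  rw [Nat.card_congr (STab.equivIncreasingLabeling _), shiftedCells_removeCell hl hi,
    sum_removeCell hl hi, hsum, Nat.add_sub_cancel]

theorem kappa_ne_zero_iff {ν l : List ℕ} :
    kappa ν l ≠ 0 ↔ IsSP ν ∧ IsSP l ∧ shiftedCells ν ⊆ shiftedCells l ∧
      (shiftedCells l).card = (shiftedCells ν).card + 1 := by
  unfold kappa
  split_ifs <;> simp_all

theorem kappa_of_ne_zero {ν l : List ℕ} (h : kappa ν l ≠ 0) :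
    kappa ν l = if ν.length = l.length then 2 else 1 := by
  rw [kappa, if_pos (kappa_ne_zero_iff.1 h)]

theorem kappa_removeCell_ne_zero_iff {l : List ℕ} (hl : IsSP l) {i : ℕ} (hi : i < l.length) :
    kappa (removeCell l i) l ≠ 0 ↔ IsRemovableRow l i := by
  have hmem := rowEnd_mem_shiftedCells hl.2 hi
  rw [kappa_ne_zero_iff, shiftedCells_removeCell hl hi, ← isSP_removeCell_iff hl hi,
    Finset.card_erase_of_mem hmem, Nat.sub_add_cancel (Finset.card_pos.2 ⟨_, hmem⟩)]
  simp [hl, Finset.erase_subset]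

theorem sum_eq_of_kappa_ne_zero {ν l : List ℕ} (h : kappa ν l ≠ 0) : l.sum = ν.sum + 1 := by
  rw [← card_shiftedCells, ← card_shiftedCells, (kappa_ne_zero_iff.1 h).2.2.2]

theorem length_le_of_kappa_ne_zero {ν l : List ℕ} (h : kappa ν l ≠ 0) :
    ν.length ≤ l.length ∧ l.length ≤ ν.length + 1 := by
  obtain ⟨hν, hl, hsub, hcard⟩ := kappa_ne_zero_iff.1 h
  constructor
  · by_contra hlt
    have := hsub ((diag_mem_shiftedCells hν.2).2 (not_le.1 hlt))
    exact lt_irrefl _ ((diag_mem_shiftedCells hl.2).1 this)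
  -- the diagonal cells `(j, j)` with `ℓ(ν) ≤ j < ℓ(λ)` all lie in the single cell of `λ \ ν`
  · have hdiag :
        (Finset.Ico ν.length l.length).card ≤ (shiftedCells l \ shiftedCells ν).card := by
      refine Finset.card_le_card_of_injOn (fun j => (j, j)) (fun j hj => ?_)
        fun a _ b _ hab => (Prod.mk.inj hab).1
      obtain ⟨hνj, hjl⟩ := Finset.mem_Ico.1 hj
      exact Finset.mem_sdiff.2 ⟨(diag_mem_shiftedCells hl.2).2 hjl,
        fun hmem => not_lt.2 hνj ((diag_mem_shiftedCells hν.2).1 hmem)⟩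
    rw [Nat.card_Ico, Finset.card_sdiff_of_subset hsub, hcard] at hdiag
    omega

theorem two_pow_mul_kappa {ν l : List ℕ} (h : kappa ν l ≠ 0) :
    2 ^ (ν.sum - ν.length) * kappa ν l = 2 ^ (l.sum - l.length) := by
  have hlen := length_le_of_kappa_ne_zero h
  have hsum := sum_eq_of_kappa_ne_zero h
  have hν := List.length_le_sum_of_one_le ν (kappa_ne_zero_iff.1 h).1.2
  rw [kappa_of_ne_zero h]
  split_ifs
  · rw [← pow_succ]
    congr 1
    omega
  · rw [mul_one]
    congr 1
    omega

theorem branchMult_mul_two_pow {ν l : List ℕ} (h : kappa ν l ≠ 0) :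
    branchMult l ν * 2 ^ (ν.sum - (ν.length - deltaP ν) / 2) =
      2 ^ (l.sum - (l.length - deltaP l) / 2) := by
  have hlen := length_le_of_kappa_ne_zero h
  have hsum := sum_eq_of_kappa_ne_zero h
  have hν := List.length_le_sum_of_one_le ν (kappa_ne_zero_iff.1 h).1.2
  rw [branchMult, if_pos h, ← pow_add, deltaP, deltaP]
  congr 1
  omega

theorem schurG_eq (n : ℕ) :
    ∀ l : List ℕ, IsSP l → l.sum = n →
      schurG n l = 2 ^ (n - l.length) * Nat.card (STab l) := by
  induction n with
  | zero =>
    intro l hl hsum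
    cases l with
    | nil => simp [schurG, card_STab_nil]
    | cons a t =>
      have := hl.2 a List.mem_cons_self
      simp only [List.sum_cons] at hsum
      omega
  | succ m ih =>
    intro l hl hsum
    rw [schurG, card_STab_eq_sum hl hsum, Finset.mul_sum, Finset.sum_filter]
    refine Finset.sum_congr rfl fun i hi => ?_
    have hi := Finset.mem_range.1 hi
    split_ifs with hrem
    · have hsum' : (removeCell l i).sum = m := by
        rw [sum_removeCell hl hi, hsum, Nat.add_sub_cancel]
      have hpow := two_pow_mul_kappa ((kappa_removeCell_ne_zero_iff hl hi).2 hrem)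
      rw [hsum', hsum] at hpow
      rw [ih _ ((isSP_removeCell_iff hl hi).2 hrem) hsum', ← mul_assoc, mul_comm (kappa _ _),
        hpow]
    · rw [not_ne_iff.1 (mt (kappa_removeCell_ne_zero_iff hl hi).1 hrem), zero_mul]

theorem gP_eq {l : List ℕ} (hl : IsSP l) : gP l = 2 ^ (l.sum - l.length) * Nat.card (STab l) :=
  schurG_eq _ l hl rfl

theorem down_transition_eq_branching_general (n : ℕ) (l ν : List ℕ)
    (hlam : IsStrictPartition l n) (hν : IsStrictPartition ν (n - 1)) :
    pDown l ν = (branchMult l ν : ℚ) * (dimL (n - 1) ν : ℚ) / (dimL n l : ℚ) := by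
  obtain ⟨-, rfl⟩ := hlam
  obtain ⟨-, hνsum⟩ := hν
  by_cases hk : kappa ν l = 0
  · simp [pDown, branchMult, hk]
  obtain ⟨hν, hl, -, -⟩ := kappa_ne_zero_iff.1 hk
  have hM : branchMult l ν ≠ 0 := by simp [branchMult, hk]
  rw [← hνsum, pDown, gP_eq hν, gP_eq hl, dimL, dimL, ← two_pow_mul_kappa hk,
    ← branchMult_mul_two_pow hk]
  push_cast
  field_simp

/-- for a strict partition `λ` of `n` and a strict partition `ν` of
`n-1`, the down transition function of the Schur graph satisfies
`p↓(λ,ν) = [L^ν : Res L^λ] · dim L^ν / dim L^λ`, where the branching multiplicity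
and the dimensions of the simple Sergeev supermodules are as in the branching and
dimension theorems for Sergeev algebras. -/
theorem down_transition_eq_branching (n : ℕ) (hn : 1 ≤ n) (l ν : List ℕ)
    (hlam : IsStrictPartition l n) (hν : IsStrictPartition ν (n - 1)) :
    pDown l ν = (branchMult l ν : ℚ) * (dimL (n - 1) ν : ℚ) / (dimL n l : ℚ) :=
  down_transition_eq_branching_general n l ν hlam hν
end
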